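/- Let T be a J-unitary operator on K. Then (V(T) + V(T)*)/2 = (1 + T)(1 + T*T)^{-1}(1 + T)* − 1. -/

import Mathlib

/-!
Put `S = [[1, 0], [c, d]]` and `R = [[a, b], [0, 1]]`. For every block operator `T`,
`1 + T = S + R` and `1 + T*T = S*S + R*R`. When `T` is `J`-unitary, `T*JT = J` and `TJT* = J`
give `a*a, aa*, d*d, dd* ≥ 1`, so `a` and `d` are invertible, and `V(T) S = R`, `R*R = S*S`.
Hence `V = V(T)` is unitary, `1 + T = (1 + V) S`, `1 + T*T = 2 S*S`, and
`(1 + T)(1 + T*T)⁻¹(1 + T)* = ½ (1 + V)(1 + V)* = 1 + ½ (V + V*)`.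
-/

noncomputable section

open ContinuousLinearMap

variable {H : Type*} [NormedAddCommGroup H] [InnerProductSpace ℂ H] [CompleteSpace H]
  [TopologicalSpace.SeparableSpace H]

local notation "K" => WithLp 2 (H × H)

/-- The 2×2 block operator `[[a,b],[c,d]]` on `K = H ⊕ H`. -/
def blk (a b c d : H →L[ℂ] H) : K →L[ℂ] K :=
  (((WithLp.prodContinuousLinearEquiv 2 ℂ H H).symm : (H × H) →L[ℂ] K).comp
      ((((a.comp (fst ℂ H H)) + (b.comp (snd ℂ H H))).prod
        ((c.comp (fst ℂ H H)) + (d.comp (snd ℂ H H)))))).comp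
    ((WithLp.prodContinuousLinearEquiv 2 ℂ H H : K →L[ℂ] (H × H)))

/-- The fundamental symmetry `J = [[1,0],[0,-1]]`. -/
def fundJ : K →L[ℂ] K := blk 1 0 0 (-1)

/-- A bounded operator `T` on the Krein space `(K, J)` is `J`-unitary if it is invertible
and `T* J T = J`. -/
def IsJUnitary (T : K →L[ℂ] K) : Prop :=
  IsUnit T ∧ star T * fundJ * T = fundJ

section Monoid

variable {M : Type*} [Monoid M]

theorem isUnit_of_isUnit_mul_of_isUnit_mul {x y : M} (hl : IsUnit (y * x))
    (hr : IsUnit (x * y)) : IsUnit x :=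
  isUnit_iff_exists_and_exists.2
    ⟨⟨y * ↑hr.unit⁻¹, by rw [← mul_assoc, hr.mul_val_inv]⟩,
      ⟨↑hl.unit⁻¹ * y, by rw [mul_assoc, hl.val_inv_mul]⟩⟩

/-- If `j` is an involution, `s j t = j` exhibits `j s j` as a left inverse of `t`; when `t` is
invertible it is also a right inverse. -/
theorem IsUnit.mul_mul_eq_of_mul_mul_eq {t j s : M} (ht : IsUnit t) (hj : j * j = 1)
    (h : s * j * t = j) : t * j * s = j := by
  obtain ⟨u, rfl⟩ := ht
  have hinv : j * s * j = ↑u⁻¹ :=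
    Units.eq_inv_of_mul_eq_one_right (by simp only [mul_assoc] at h ⊢; rw [h, hj])
  calc ↑u * j * s = ↑u * (j * s * j) * j := by simp only [mul_assoc, hj, mul_one]
    _ = j := by rw [hinv, u.mul_inv, one_mul]

theorem mem_unitary_of_mul_eq [StarMul M] {v s r : M} (hs : IsUnit s) (hr : IsUnit r)
    (hvs : v * s = r) (hrr : star r * r = star s * s) : v ∈ unitary M := by
  obtain ⟨u, rfl⟩ := hs
  have hv : v = r * ↑u⁻¹ := by rw [← hvs, mul_assoc, u.mul_inv, mul_one]
  have hstar : star v * v = 1 := by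
    have : star (↑u : M) * (star v * v) * ↑u = star ↑u * 1 * ↑u := by
      rw [mul_one, ← hrr, ← hvs, star_mul]; simp only [mul_assoc]
    exact u.isUnit.star.mul_left_cancel (u.isUnit.mul_right_cancel this)
  refine Unitary.mem_iff.2 ⟨hstar, ?_⟩
  obtain ⟨w, rfl⟩ : IsUnit v := hv ▸ hr.mul (u⁻¹).isUnit
  rw [Units.eq_inv_of_mul_eq_one_right hstar, w.mul_inv]

end Monoid

theorem CStarAlgebra.isUnit_of_one_le_star_mul_self_of_one_le_mul_star_self {A : Type*}
    [CStarAlgebra A] [PartialOrder A] [StarOrderedRing A] {a : A} (h₁ : 1 ≤ star a * a)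
    (h₂ : 1 ≤ a * star a) : IsUnit a :=
  isUnit_of_isUnit_mul_of_isUnit_mul (isUnit_of_le 1 h₁) (isUnit_of_le 1 h₂)

open Ring in
theorem add_mul_inverse_mul_star_add_sub_one_of_mem_unitary {𝕜 A : Type*} [Field 𝕜]
    [CharZero 𝕜] [Ring A] [StarRing A] [Algebra 𝕜 A] {s v : A} (hs : IsUnit s)
    (hv : v ∈ unitary A) :
    (s + v * s) * (star s * s + star (v * s) * (v * s))⁻¹ʳ * star (s + v * s) - 1
      = (2 : 𝕜)⁻¹ • (v + star v) := by
  obtain ⟨u, rfl⟩ := hs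
  set w : A := ↑u⁻¹ * star (↑u⁻¹ : A)
  have hstar_inv : star (↑u⁻¹ : A) * star (↑u : A) = 1 := by rw [← star_mul, u.mul_inv, star_one]
  have hgram : star (v * ↑u) * (v * ↑u) = star (↑u : A) * ↑u := by
    rw [star_mul, mul_assoc, ← mul_assoc (star v), Unitary.star_mul_self_of_mem hv, one_mul]
  have hinv : (star (↑u : A) * ↑u + star (v * ↑u) * (v * ↑u))⁻¹ʳ = (2 : 𝕜)⁻¹ • w := by
    have hw : star (↑u : A) * ↑u * w = 1 := by
      simp only [w, mul_assoc, u.mul_inv_cancel_left, ← star_mul, u.inv_mul, star_one]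
    have hw' : w * (star (↑u : A) * ↑u) = 1 := by
      simp only [w, mul_assoc, ← mul_assoc (star (↑u⁻¹ : A)), hstar_inv, one_mul, u.inv_mul]
    rw [hgram]
    refine inverse_unit ⟨_, (2 : 𝕜)⁻¹ • w, ?_, ?_⟩
    · rw [mul_smul_comm, add_mul, hw]; module
    · rw [smul_mul_assoc, mul_add, hw']; module
  have hsum : ↑u + v * ↑u = (1 + v) * ↑u := by rw [add_mul, one_mul]
  have hcancel : (1 + v) * ↑u * w * star ((1 + v) * ↑u) = (1 + v) * star (1 + v) := by
    simp only [w, star_mul, mul_assoc, u.mul_inv_cancel_left, ← mul_assoc (star (↑u⁻¹ : A)),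
      hstar_inv, one_mul]
  rw [hinv, hsum, mul_smul_comm, smul_mul_assoc, hcancel]
  simp only [star_add, star_one, mul_add, add_mul, mul_one, one_mul,
    Unitary.mul_star_self_of_mem hv]
  module

section BlockAlgebra

omit [CompleteSpace H] [TopologicalSpace.SeparableSpace H]

variable (a b c d a' b' c' d' : H →L[ℂ] H)

theorem blk_apply (x : K) :
    blk a b c d x = WithLp.toLp 2 (a x.ofLp.1 + b x.ofLp.2, c x.ofLp.1 + d x.ofLp.2) := rfl

theorem blk_add : blk a b c d + blk a' b' c' d' = blk (a + a') (b + b') (c + c') (d + d') := by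
  ext x
  simp only [add_apply, blk_apply, ← WithLp.toLp_add, Prod.mk_add_mk]
  congr 2 <;> abel

theorem blk_mul :
    blk a b c d * blk a' b' c' d'
      = blk (a * a' + b * c') (a * b' + b * d') (c * a' + d * c') (c * b' + d * d') := by
  ext x
  simp only [mul_apply_eq_comp, blk_apply, map_add, add_apply]
  congr 2 <;> abel

theorem blk_one : blk 1 0 0 1 = (1 : K →L[ℂ] K) := by
  ext x
  simp only [blk_apply, one_apply_eq_self, zero_apply, add_zero, zero_add]

variable {a b c d a' b' c' d'}

theorem blk_inj : blk a b c d = blk a' b' c' d' ↔ a = a' ∧ b = b' ∧ c = c' ∧ d = d' := by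
  refine ⟨fun h => ?_, fun ⟨rfl, rfl, rfl, rfl⟩ => rfl⟩
  have key (u v : H) : (a u + b v, c u + d v) = (a' u + b' v, c' u + d' v) := by
    simpa [blk_apply] using congrArg (fun T : K →L[ℂ] K => (T (WithLp.toLp 2 (u, v))).ofLp) h
  refine ⟨?_, ?_, ?_, ?_⟩ <;> ext u
  · simpa using congrArg Prod.fst (key u 0)
  · simpa using congrArg Prod.fst (key 0 u)
  · simpa using congrArg Prod.snd (key u 0)
  · simpa using congrArg Prod.snd (key 0 u)

theorem isUnit_blk_lower (ha : IsUnit a) (hd : IsUnit d) : IsUnit (blk a 0 c d) := by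
  obtain ⟨u, rfl⟩ := ha
  obtain ⟨w, rfl⟩ := hd
  refine isUnit_iff_exists.2 ⟨blk ↑u⁻¹ 0 (-(↑w⁻¹ * c * ↑u⁻¹)) ↑w⁻¹, ?_, ?_⟩ <;>
    rw [blk_mul, ← blk_one, blk_inj] <;> simp [mul_assoc]

theorem one_add_blk : 1 + blk a b c d = blk 1 0 c d + blk a b 0 1 := by
  rw [← blk_one, blk_add, blk_add, blk_inj]
  refine ⟨?_, ?_, ?_, ?_⟩ <;> abel

theorem fundJ_mul_fundJ : (fundJ : K →L[ℂ] K) * fundJ = 1 := by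
  rw [fundJ, blk_mul, ← blk_one, blk_inj]
  simp

end BlockAlgebra

section JUnitary

omit [TopologicalSpace.SeparableSpace H]

variable {a b c d : H →L[ℂ] H}

theorem star_blk (a b c d : H →L[ℂ] H) :
    star (blk a b c d) = blk (star a) (star c) (star b) (star d) := by
  rw [star_eq_adjoint, eq_comm, eq_adjoint_iff]
  intro x y
  simp only [blk_apply, WithLp.prod_inner_apply, star_eq_adjoint, inner_add_left, inner_add_right,
    adjoint_inner_left]
  ring

theorem isUnit_blk_upper (ha : IsUnit a) (hd : IsUnit d) : IsUnit (blk a b 0 d) := by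
  rw [← isUnit_star, star_blk, star_zero]
  exact isUnit_blk_lower ha.star hd.star

theorem one_add_star_blk_mul_blk :
    1 + star (blk a b c d) * blk a b c d
      = star (blk 1 0 c d) * blk 1 0 c d + star (blk a b 0 1) * blk a b 0 1 := by
  simp only [← blk_one, star_blk, blk_mul, blk_add, blk_inj, star_one, star_zero]
  refine ⟨?_, ?_, ?_, ?_⟩ <;> noncomm_ring

theorem star_blk_mul_fundJ_mul_blk :
    star (blk a b c d) * fundJ * blk a b c d
      = blk (star a * a - star c * c) (star a * b - star c * d) (star b * a - star d * c)
          (star b * b - star d * d) := by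
  simp only [fundJ, star_blk, blk_mul, blk_inj]
  refine ⟨?_, ?_, ?_, ?_⟩ <;> noncomm_ring

theorem blk_mul_fundJ_mul_star_blk :
    blk a b c d * fundJ * star (blk a b c d)
      = blk (a * star a - b * star b) (a * star c - b * star d) (c * star a - d * star b)
          (c * star c - d * star d) := by
  simp only [fundJ, star_blk, blk_mul, blk_inj]
  refine ⟨?_, ?_, ?_, ?_⟩ <;> noncomm_ring

theorem IsJUnitary.mul_fundJ_mul_star {T : K →L[ℂ] K} (hT : IsJUnitary T) :
    T * fundJ * star T = fundJ :=
  hT.1.mul_mul_eq_of_mul_mul_eq fundJ_mul_fundJ hT.2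

theorem IsJUnitary.blk_column_relations (hT : IsJUnitary (blk a b c d)) :
    star a * a = 1 + star c * c ∧ star a * b = star c * d ∧ star b * a = star d * c ∧
      star d * d = 1 + star b * b := by
  obtain ⟨h₁, h₂, h₃, h₄⟩ := blk_inj.1 ((star_blk_mul_fundJ_mul_blk).symm.trans hT.2)
  refine ⟨eq_add_of_sub_eq h₁, sub_eq_zero.1 h₂, sub_eq_zero.1 h₃, ?_⟩
  rw [← neg_sub, neg_inj] at h₄
  exact eq_add_of_sub_eq h₄

theorem IsJUnitary.blk_row_relations (hT : IsJUnitary (blk a b c d)) :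
    a * star a = 1 + b * star b ∧ d * star d = 1 + c * star c := by
  obtain ⟨h₁, -, -, h₄⟩ :=
    blk_inj.1 ((blk_mul_fundJ_mul_star_blk).symm.trans hT.mul_fundJ_mul_star)
  refine ⟨eq_add_of_sub_eq h₁, ?_⟩
  rw [← neg_sub, neg_inj] at h₄
  exact eq_add_of_sub_eq h₄

theorem IsJUnitary.isUnit_blk_diag (hT : IsJUnitary (blk a b c d)) : IsUnit a ∧ IsUnit d := by
  obtain ⟨h₁, -, -, h₄⟩ := hT.blk_column_relations
  obtain ⟨k₁, k₄⟩ := hT.blk_row_relations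
  exact ⟨CStarAlgebra.isUnit_of_one_le_star_mul_self_of_one_le_mul_star_self
      (h₁ ▸ le_add_of_nonneg_right (star_mul_self_nonneg c))
      (k₁ ▸ le_add_of_nonneg_right (mul_star_self_nonneg b)),
    CStarAlgebra.isUnit_of_one_le_star_mul_self_of_one_le_mul_star_self
      (h₄ ▸ le_add_of_nonneg_right (star_mul_self_nonneg b))
      (k₄ ▸ le_add_of_nonneg_right (mul_star_self_nonneg c))⟩

/-- The paper's `V(T)` for `T = blk a b c d`. As `(a*)⁻¹ = a - b d⁻¹ c` when `T` is `J`-unitary,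
it is then the Potapov–Ginzburg transform of `T`. -/
def potapovGinzburg (a b c d : H →L[ℂ] H) : K →L[ℂ] K :=
  blk (Ring.inverse (star a)) (b * Ring.inverse d) (-(Ring.inverse d * c)) (Ring.inverse d)

theorem IsJUnitary.potapovGinzburg_mul (hT : IsJUnitary (blk a b c d)) :
    potapovGinzburg a b c d * blk 1 0 c d = blk a b 0 1 := by
  obtain ⟨h₁, h₂, -, -⟩ := hT.blk_column_relations
  obtain ⟨ha, hd⟩ := hT.isUnit_blk_diag
  rw [potapovGinzburg, blk_mul, blk_inj]
  refine ⟨?_, ?_, ?_, ?_⟩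
  · apply ha.star.mul_left_cancel
    calc star a * (Ring.inverse (star a) * 1 + b * Ring.inverse d * c)
        = 1 + star c * (d * Ring.inverse d) * c := by
          rw [mul_one, mul_add, Ring.mul_inverse_cancel _ ha.star, ← mul_assoc, ← mul_assoc, h₂,
            mul_assoc (star c)]
      _ = star a * a := by rw [Ring.mul_inverse_cancel _ hd, mul_one, h₁]
  · rw [mul_zero, zero_add, mul_assoc, Ring.inverse_mul_cancel _ hd, mul_one]
  · rw [mul_one, neg_add_cancel]
  · rw [mul_zero, zero_add, Ring.inverse_mul_cancel _ hd]

theorem IsJUnitary.star_blk_upper_mul_self (hT : IsJUnitary (blk a b c d)) :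
    star (blk a b 0 1) * blk a b 0 1 = star (blk 1 0 c d) * blk 1 0 c d := by
  obtain ⟨h₁, h₂, h₃, h₄⟩ := hT.blk_column_relations
  simp only [star_blk, blk_mul, blk_inj, star_one, star_zero]
  refine ⟨?_, ?_, ?_, ?_⟩ <;> simp only [h₁, h₂, h₃, h₄] <;> noncomm_ring

theorem IsJUnitary.potapovGinzburg_mem_unitary (hT : IsJUnitary (blk a b c d)) :
    potapovGinzburg a b c d ∈ unitary (K →L[ℂ] K) := by
  obtain ⟨ha, hd⟩ := hT.isUnit_blk_diag
  exact mem_unitary_of_mul_eq (isUnit_blk_lower isUnit_one hd) (isUnit_blk_upper ha isUnit_one)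
    hT.potapovGinzburg_mul hT.star_blk_upper_mul_self

end JUnitary

/-- Proposition 3.14 of the paper: for a `J`-unitary
`T = [[a,b],[c,d]]` with associated unitary `V(T) = [[(a*)⁻¹, bd⁻¹],[−d⁻¹c, d⁻¹]]`,
the real part of `V(T)` is given by `(1+T)(1+T*T)⁻¹(1+T)* − 1`. -/
theorem re_V_eq (a b c d : H →L[ℂ] H) (hT : IsJUnitary (blk a b c d)) :
    ((2 : ℂ)⁻¹ • (blk (Ring.inverse (star a)) (b * Ring.inverse d)
        (-(Ring.inverse d * c)) (Ring.inverse d)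
      + star (blk (Ring.inverse (star a)) (b * Ring.inverse d)
        (-(Ring.inverse d * c)) (Ring.inverse d))))
      = (1 + blk a b c d)
          * Ring.inverse (1 + star (blk a b c d) * blk a b c d)
          * star (1 + blk a b c d) - 1 := by
  change (2 : ℂ)⁻¹ • (potapovGinzburg a b c d + star (potapovGinzburg a b c d)) = _
  rw [one_add_blk, one_add_star_blk_mul_blk, ← hT.potapovGinzburg_mul,
    add_mul_inverse_mul_star_add_sub_one_of_mem_unitary (𝕜 := ℂ)
      (isUnit_blk_lower isUnit_one hT.isUnit_blk_diag.2) hT.potapovGinzburg_mem_unitary]
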